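/- arXiv:2604.00045 — 10 statements merged into one kernel-verified Lean document; each statement's English description precedes it below -/
import Mathlib

section
/- Let p be a prime with p > b ≥ 2 and gcd(p,b) = 1, and define δ(r) = ⌊b·r/p⌋. For r, s ∈ {1,...,p-1}, δ(r) = δ(s) if and only if (b·r mod p) ≡ (b·s mod p) (mod b). -/
theorem conjugation (p b : ℕ) (hp : p.Prime) (hb : 2 ≤ b) (hbp : b < p)
    (hcop : Nat.gcd p b = 1)
    (r s : ℕ) (hr : r ∈ Finset.Icc 1 (p - 1)) (hs : s ∈ Finset.Icc 1 (p - 1)) :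
    b * r / p = b * s / p ↔ (b * r % p) % b = (b * s % p) % b := by
  have hp0 : 0 < p := hp.pos
  have hb0 : 0 < b := by omega
  simp only [Finset.mem_Icc] at hr hs
  have hdr : b * r / p < b := Nat.div_lt_of_lt_mul (by
    have h1 : r < p := by omega
    nlinarith)
  have hds : b * s / p < b := Nat.div_lt_of_lt_mul (by
    have h1 : s < p := by omega
    nlinarith)
  have key : ∀ x : ℕ, ((b * x % p : ℕ) : ZMod b) = -((p : ZMod b) * (b * x / p : ℕ)) := by
    intro x
    have h := Nat.mod_add_div (b * x) p
    have : ((b * x % p : ℕ) : ZMod b) + (p : ZMod b) * (b * x / p : ℕ) = ((b * x : ℕ) : ZMod b) := by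
      exact_mod_cast congrArg (Nat.cast : ℕ → ZMod b) h
    have hz : ((b * x : ℕ) : ZMod b) = 0 := by
      push_cast
      simp [ZMod.natCast_self]
    rw [hz] at this
    linear_combination this
  have hpu : IsUnit (p : ZMod b) := (ZMod.isUnit_iff_coprime p b).mpr hcop
  constructor
  · intro h
    have hc : ((b * r % p : ℕ) : ZMod b) = ((b * s % p : ℕ) : ZMod b) := by
      rw [key r, key s, h]
    exact (ZMod.natCast_eq_natCast_iff' _ _ _).mp hc
  · intro h
    have hcast : ((b * r % p : ℕ) : ZMod b) = ((b * s % p : ℕ) : ZMod b) := by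
      rw [ZMod.natCast_eq_natCast_iff']
      simpa using h
    rw [key r, key s, neg_inj] at hcast
    have := hpu.mul_left_cancel hcast
    have h2 : (b * r / p) % b = (b * s / p) % b :=
      (ZMod.natCast_eq_natCast_iff' _ _ _).mp this
    rwa [Nat.mod_eq_of_lt hdr, Nat.mod_eq_of_lt hds] at h2
end

section
/- Let p be a prime, p > b ≥ 2 with gcd(p,b)=1, and g a unit mod p. Then the number of r ∈ {1,...,p-1} with ⌊b·r/p⌋ = ⌊b·(g·r mod p)/p⌋ equals the number of x ∈ {1,...,p-1} with x ≡ (g·x mod p) (mod b). -/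
/-!
Multiplication by `b` permutes `{1, …, p-1}` modulo `p`, and `r ↦ x = b r mod p` carries the
collision condition onto the congruence condition. Indeed, write `b r = p q + x` with
`q = ⌊b r / p⌋ < b`. Then `x ≡ -p q (mod b)`, and `p` is invertible modulo `b`, so `q` is determined
by `x mod b`; and `b (g r mod p) ≡ g x (mod p)`, so the partner of `r` is sent to `g x mod p`.
-/

open Finset

theorem Finset.card_filter_eq_of_injOn {α : Type*} {s : Finset α} {f : α → α}
    (hf : Set.MapsTo f s s) (hinj : Set.InjOn f s) (P Q : α → Prop) [DecidablePred P]
    [DecidablePred Q] (hPQ : ∀ a ∈ s, P a ↔ Q (f a)) :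
    #(s.filter P) = #(s.filter Q) := by
  have hsurj : Set.SurjOn f s s := surjOn_of_injOn_of_card_le f hf hinj le_rfl
  refine card_nbij f (fun a ha => ?_) (hinj.mono (coe_subset.2 (filter_subset P s)))
    (fun x hx => ?_)
  · simp only [coe_filter, Set.mem_ofPred_eq] at ha ⊢
    exact ⟨hf ha.1, (hPQ a ha.1).1 ha.2⟩
  · simp only [coe_filter, Set.mem_ofPred_eq] at hx
    obtain ⟨a, ha, rfl⟩ := hsurj hx.1
    exact ⟨a, by simpa only [coe_filter, Set.mem_ofPred_eq] using ⟨ha, (hPQ a ha).2 hx.2⟩, rfl⟩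

namespace Nat

theorem mul_mod_mod_comm (a b c p : ℕ) : a * (b * c % p) % p = b * (a * c % p) % p := by
  rw [Nat.mul_mod_mod, Nat.mul_mod_mod, Nat.mul_left_comm]

variable {p b : ℕ}

theorem injOn_mul_mod (hbp : Coprime b p) : Set.InjOn (fun r => b * r % p) (Set.Iio p) :=
  fun _ hr _ hs h => (ModEq.cancel_left_of_coprime hbp.symm h).eq_of_lt_of_lt hr hs

theorem mul_mod_mem_Icc (hbp : Coprime b p) {r : ℕ} (hr : r ∈ Icc 1 (p - 1)) :
    b * r % p ∈ Icc 1 (p - 1) := by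
  rw [mem_Icc] at hr ⊢
  have hp : 0 < p := by omega
  have hne : b * r % p ≠ 0 := fun h =>
    absurd (Nat.le_of_dvd hr.1 (hbp.symm.dvd_of_dvd_mul_left (dvd_of_mod_eq_zero h))) (by omega)
  have hlt := mod_lt (b * r) hp
  omega

theorem mul_div_eq_mul_div_iff (hb : 0 < b) (hbp : Coprime b p) {r s : ℕ} (hr : r < p)
    (hs : s < p) : b * r / p = b * s / p ↔ b * r % p ≡ b * s % p [MOD b] := by
  have hdecomp (t : ℕ) : p * (b * t / p) + b * t % p ≡ 0 [MOD b] := by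
    rw [div_add_mod]; exact modEq_zero_iff_dvd.2 (dvd_mul_right b t)
  have hsum := (hdecomp r).trans (hdecomp s).symm
  have hquot_lt {t : ℕ} (ht : t < p) : b * t / p < b :=
    Nat.div_lt_of_lt_mul (by rw [mul_comm p]; exact Nat.mul_lt_mul_of_pos_left ht hb)
  constructor
  · intro h
    rw [h] at hsum
    exact ModEq.add_left_cancel' _ hsum
  · intro h
    exact (ModEq.cancel_left_of_coprime hbp (ModEq.add_right_cancel h hsum)).eq_of_lt_of_lt
      (hquot_lt hr) (hquot_lt hs)

end Nat

theorem collision_congruence_general (p b g : ℕ) (hp : p.Prime) (hb : 2 ≤ b)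
    (hcop : ¬ p ∣ b) :
    ((Finset.Icc 1 (p - 1)).filter
      (fun r => b * r / p = b * (g * r % p) / p)).card =
    ((Finset.Icc 1 (p - 1)).filter
      (fun x => x % b = (g * x % p) % b)).card := by
  have hbp : b.Coprime p := (hp.coprime_iff_not_dvd.2 hcop).symm
  have hIcc_lt {r : ℕ} (hr : r ∈ Icc 1 (p - 1)) : r < p := by
    rw [mem_Icc] at hr; omega
  refine Finset.card_filter_eq_of_injOn (f := fun r => b * r % p)
    (fun r hr => Nat.mul_mod_mem_Icc hbp hr) ((Nat.injOn_mul_mod hbp).mono fun r hr => hIcc_lt hr)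
    _ _ fun r hr => ?_
  rw [Nat.mul_div_eq_mul_div_iff (by omega) hbp (hIcc_lt hr) (Nat.mod_lt _ hp.pos),
    ← Nat.mul_mod_mod_comm]
  rfl

theorem collision_congruence (p b g : ℕ) (hp : p.Prime) (hb : 2 ≤ b) (hbp : b < p)
    (hcop : ¬ p ∣ b) (hg : g ∈ Finset.Icc 1 (p - 1)) :
    ((Finset.Icc 1 (p - 1)).filter
      (fun r => b * r / p = b * (g * r % p) / p)).card =
    ((Finset.Icc 1 (p - 1)).filter
      (fun x => x % b = (g * x % p) % b)).card :=
  collision_congruence_general p b g hp hb hcop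
end

section
/- Let p be prime with p > b ≥ 2, and let g ∈ {2,...,p-1} (so g ≢ 1 mod p). Define c ∈ {1,...,p-1} by c·(1-g) ≡ b (mod p). If 1 ≤ c ≤ b-1, then there is no x ∈ {1,...,p-1} with x ≡ (g·x mod p) (mod b). -/
private lemma small_k (p k : ℤ) (hp : 0 < p) (h1 : -p < p * k) (h2 : p * k < p) : k = 0 := by
  rcases lt_trichotomy k 0 with h | h | h
  · exfalso
    have : p * k ≤ p * (-1) := mul_le_mul_of_nonneg_left (by omega) hp.le
    omega
  · exact h
  · exfalso
    have : p * 1 ≤ p * k := mul_le_mul_of_nonneg_left (by omega) hp.le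
    omega

theorem no_collision (p b g c : ℕ) (hp : p.Prime) (hb : 2 ≤ b) (hbp : b < p)
    (hg : g ∈ Finset.Icc 2 (p - 1))
    (hc : c ∈ Finset.Icc 1 (p - 1))
    (hceq : (c : ℤ) * (1 - (g : ℤ)) ≡ (b : ℤ) [ZMOD p])
    (hcb : c ≤ b - 1) :
    ¬ ∃ x ∈ Finset.Icc 1 (p - 1), x % b = (g * x % p) % b := by
  simp only [Finset.mem_Icc] at hg hc
  rintro ⟨x, hx, hmod⟩
  simp only [Finset.mem_Icc] at hx
  have hp2 : 2 ≤ p := hp.two_le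
  set y := g * x % p with hy
  have hyp : y < p := Nat.mod_lt _ (by omega)
  have hy1 : 1 ≤ y := by
    rcases Nat.eq_zero_or_pos y with h0 | h
    · exfalso
      have hdvd : p ∣ g * x := Nat.dvd_of_mod_eq_zero h0
      rcases (Nat.Prime.dvd_mul hp).1 hdvd with h | h
      · have := Nat.le_of_dvd (by omega) h; omega
      · have := Nat.le_of_dvd (by omega) h; omega
    · exact h
  -- divisibility facts in ℤ
  have hbdvd : (b : ℤ) ∣ (x : ℤ) - (y : ℤ) := by
    have h1 : x ≡ y [MOD b] := hmod
    exact dvd_sub_comm.mp h1.dvd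
  obtain ⟨m, hm⟩ := hbdvd
  have hpy : (p : ℤ) ∣ (y : ℤ) - (g : ℤ) * x := by
    have h1 : g * x ≡ y [MOD p] := (Nat.mod_modEq (g * x) p).symm
    have := h1.dvd
    push_cast at this
    exact this
  obtain ⟨k1, hk1⟩ := hpy
  obtain ⟨k2, hk2⟩ := hceq.dvd
  -- key: p ∣ b * (c*m - x)
  have key : (p : ℤ) ∣ (b : ℤ) * ((c : ℤ) * m - x) := by
    refine ⟨-(c : ℤ) * k1 - (x : ℤ) * k2, ?_⟩
    linear_combination (-(c : ℤ)) * hm + (-(c : ℤ)) * hk1 + (-(x : ℤ)) * hk2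
  have hpnotb : ¬ (p : ℤ) ∣ (b : ℤ) := by
    rw [Int.natCast_dvd_natCast]
    intro h
    have := Nat.le_of_dvd (by omega) h
    omega
  have hpprime : Prime (p : ℤ) := Nat.prime_iff_prime_int.mp hp
  have hdcm : (p : ℤ) ∣ (c : ℤ) * m - x := (hpprime.dvd_mul.mp key).resolve_left hpnotb
  obtain ⟨k, hk⟩ := hdcm
  -- integer bounds
  have hxz : 1 ≤ (x : ℤ) ∧ (x : ℤ) ≤ (p : ℤ) - 1 := by omega
  have hyz : 1 ≤ (y : ℤ) ∧ (y : ℤ) ≤ (p : ℤ) - 1 := by omega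
  have hcz : 1 ≤ (c : ℤ) ∧ (c : ℤ) ≤ (b : ℤ) - 1 := by omega
  have hbz : 2 ≤ (b : ℤ) ∧ (b : ℤ) < (p : ℤ) := by omega
  have hppos : (0 : ℤ) < p := by omega
  rcases lt_trichotomy m 0 with hm0 | hm0 | hm0
  · -- m ≤ -1
    have h2' : (b : ℤ) * (-m) = -((b : ℤ) * m) := by ring
    have h3' : (c : ℤ) * (-m) = -((c : ℤ) * m) := by ring
    have hbm : (b : ℤ) * (-m) ≤ (p : ℤ) - 2 := by omega
    have h1 : (c : ℤ) * (-m) ≤ ((b : ℤ) - 1) * (-m) :=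
      mul_le_mul_of_nonneg_right (by omega) (by omega)
    have h2 : ((b : ℤ) - 1) * (-m) = (b : ℤ) * (-m) - (-m) := by ring
    have hcmneg : 1 * (-m) ≤ (c : ℤ) * (-m) := mul_le_mul_of_nonneg_right (by omega) (by omega)
    have hk1' : k = -1 := by
      have hk10 : k + 1 = 0 := by
        apply small_k p (k + 1) hppos <;>
          · have hexp : (p : ℤ) * (k + 1) = (p : ℤ) * k + p := by ring
            omega
      omega
    rw [hk1'] at hk
    have hbc : 1 * (-m) ≤ ((b : ℤ) - c) * (-m) := mul_le_mul_of_nonneg_right (by omega) (by omega)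
    have hexp : ((b : ℤ) - c) * (-m) = (c : ℤ) * m - (b : ℤ) * m := by ring
    omega
  · -- m = 0 : x = y, then p ∣ x*(g-1)
    subst hm0
    have hxy : (x : ℤ) = y := by omega
    have hdv : (p : ℤ) ∣ (x : ℤ) * ((g : ℤ) - 1) := ⟨-k1, by linear_combination -hk1 - hxy⟩
    rcases hpprime.dvd_mul.mp hdv with h | h
    · have := Int.le_of_dvd (by omega) h; omega
    · have := Int.le_of_dvd (by omega) h; omega
  · -- m ≥ 1
    have hbm : (b : ℤ) * m ≤ (p : ℤ) - 2 := by omega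
    have h1 : (c : ℤ) * m ≤ ((b : ℤ) - 1) * m :=
      mul_le_mul_of_nonneg_right (by omega) (by omega)
    have h2 : ((b : ℤ) - 1) * m = (b : ℤ) * m - m := by ring
    have hcm1 : 1 * m ≤ (c : ℤ) * m := mul_le_mul_of_nonneg_right (by omega) (by omega)
    have hk0 : k = 0 := by
      apply small_k p k hppos <;> omega
    rw [hk0, mul_zero] at hk
    have hbc : 1 * m ≤ ((b : ℤ) - c) * m := mul_le_mul_of_nonneg_right (by omega) (by omega)
    have hexp : ((b : ℤ) - c) * m = (b : ℤ) * m - (c : ℤ) * m := by ring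
    omega
end

section
/- Let p be prime with p > b ≥ 2 and gcd(p,b)=1. The set of units g mod p with collision count C(g) = 0 is exactly {(-u)·(b-u)^{-1} mod p : u = 1,...,b-1}, and this set has exactly b-1 elements. -/
/-- Core arithmetic contradiction: if `p ∣ s*(b-u) + u*r` with `r ≠ s` both in `[1,p-1]`,
`1 ≤ u < b`, then `⌊br/p⌋ ≠ ⌊bs/p⌋`. -/
lemma gate_arith (p b u r s : ℕ) (hu : 0 < u) (hub : u < b)
    (hr : 0 < r) (hrp : r < p) (hs : 0 < s) (hsp : s < p) (hrs : r ≠ s)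
    (hdvd : p ∣ s * (b - u) + u * r)
    (hk : b * r / p = b * s / p) : False := by
  obtain ⟨m, hm⟩ := hdvd
  have hbu : 0 < b - u := by omega
  have hp0 : 0 < p := by omega
  have e1 := Nat.div_add_mod (b * r) p
  have e2 := Nat.div_add_mod (b * s) p
  have l1 : b * r % p < p := Nat.mod_lt _ hp0
  have l2 : b * s % p < p := Nat.mod_lt _ hp0
  have hbr : b * r = r * (b - u) + u * r := by
    have h : (b - u) + u = b := by omega
    calc b * r = ((b - u) + u) * r := by rw [h]
    _ = r * (b - u) + u * r := by ring
  have hbs : b * s = s * (b - u) + u * s := by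
    have h : (b - u) + u = b := by omega
    calc b * s = ((b - u) + u) * s := by rw [h]
    _ = s * (b - u) + u * s := by ring
  rcases Nat.lt_or_ge r s with h | h
  · -- r < s : b*r < p*m < b*s
    have h1 : b * r < p * m := by
      rw [hbr, ← hm]
      have : r * (b - u) < s * (b - u) := by
        exact Nat.mul_lt_mul_of_lt_of_le h (le_refl _) hbu
      omega
    have h2 : p * m < b * s := by
      rw [hbs, ← hm]
      have : u * r < u * s := Nat.mul_lt_mul_of_le_of_lt (le_refl u) h hu
      omega
    have c1 : b * r / p < m := by
      have : p * (b * r / p) < p * m := by omega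
      exact Nat.lt_of_mul_lt_mul_left this
    have c2 : m < b * s / p + 1 := by
      have : p * m < p * (b * s / p + 1) := by
        rw [Nat.mul_add, Nat.mul_one]; omega
      exact Nat.lt_of_mul_lt_mul_left this
    omega
  · have h' : s < r := by omega
    -- s < r : b*s < p*m < b*r
    have h1 : b * s < p * m := by
      rw [hbs, ← hm]
      have : u * s < u * r := Nat.mul_lt_mul_of_le_of_lt (le_refl u) h' hu
      omega
    have h2 : p * m < b * r := by
      rw [hbr, ← hm]
      have : s * (b - u) < r * (b - u) := by
        exact Nat.mul_lt_mul_of_lt_of_le h' (le_refl _) hbu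
      omega
    have c1 : b * s / p < m := by
      have : p * (b * s / p) < p * m := by omega
      exact Nat.lt_of_mul_lt_mul_left this
    have c2 : m < b * r / p + 1 := by
      have : p * m < p * (b * r / p + 1) := by
        rw [Nat.mul_add, Nat.mul_one]; omega
      exact Nat.lt_of_mul_lt_mul_left this
    omega

lemma gate_cast_ne (p : ℕ) (x : ℕ) (hx : 0 < x) (hxp : x < p) : (x : ZMod p) ≠ 0 := by
  intro h0
  rw [ZMod.natCast_eq_zero_iff] at h0
  exact absurd (Nat.le_of_dvd hx h0) (by omega)

/-- If `g ≡ -u (b-u)⁻¹` with `1 ≤ u ≤ b-1`, then `g` has no collision. -/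
lemma gate_no_collision (p b u g r : ℕ) (hp : p.Prime) (hb : 2 ≤ b) (hbp : b < p)
    (hu1 : 1 ≤ u) (hub : u ≤ b - 1)
    (hgz : (g : ZMod p) = (-(u : ZMod p)) * ((b : ZMod p) - (u : ZMod p))⁻¹)
    (hg1 : 1 ≤ g) (hgp : g < p) (hr1 : 1 ≤ r) (hrp : r < p) :
    b * r / p ≠ b * (g * r % p) / p := by
  haveI := Fact.mk hp
  haveI : NeZero p := ⟨hp.pos.ne'⟩
  intro hcol
  set s := g * r % p with hsdef
  have hsp : s < p := Nat.mod_lt _ hp.pos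
  have hbuz : ((b : ZMod p) - (u : ZMod p)) = ((b - u : ℕ) : ZMod p) :=
    (Nat.cast_sub (by omega)).symm
  have hzd : ((b : ZMod p) - (u : ZMod p)) ≠ 0 := by
    rw [hbuz]; exact gate_cast_ne p (b - u) (by omega) (by omega)
  have hr0 : (r : ZMod p) ≠ 0 := gate_cast_ne p r (by omega) hrp
  have hg0 : (g : ZMod p) ≠ 0 := gate_cast_ne p g (by omega) hgp
  have hscast : (s : ZMod p) = (g : ZMod p) * (r : ZMod p) := by
    rw [hsdef, ZMod.natCast_mod, Nat.cast_mul]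
  have hs0 : (s : ZMod p) ≠ 0 := by rw [hscast]; exact mul_ne_zero hg0 hr0
  have hs1 : 0 < s := by
    rcases Nat.eq_zero_or_pos s with h | h
    · exact absurd (by rw [h, Nat.cast_zero]) hs0
    · exact h
  have hinv : ((b : ZMod p) - (u : ZMod p))⁻¹ * ((b : ZMod p) - (u : ZMod p)) = 1 :=
    inv_mul_cancel₀ hzd
  -- key: p ∣ s*(b-u) + u*r
  have hkey : ((s * (b - u) + u * r : ℕ) : ZMod p) = 0 := by
    push_cast [Nat.cast_sub (show u ≤ b by omega)]
    rw [hscast, hgz]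
    linear_combination (-(u : ZMod p)) * (r : ZMod p) * hinv
  have hdvd : p ∣ s * (b - u) + u * r := by
    rwa [ZMod.natCast_eq_zero_iff] at hkey
  have hrs : r ≠ s := by
    intro h
    have hgr : (g : ZMod p) * (r : ZMod p) = 1 * (r : ZMod p) := by
      rw [← hscast, ← h, one_mul]
    have hgone : (g : ZMod p) = 1 := mul_right_cancel₀ hr0 hgr
    rw [hgz] at hgone
    have h3 := congrArg (fun z => z * ((b : ZMod p) - (u : ZMod p))) hgone
    simp only [one_mul] at h3
    rw [mul_assoc, hinv, mul_one] at h3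
    -- h3 : -(u) = b - u  ⇒ b = 0
    have hb0 : (b : ZMod p) = 0 := by linear_combination -h3
    exact gate_cast_ne p b (by omega) hbp hb0
  exact gate_arith p b u r s (by omega) (by omega) (by omega) hrp hs1 hsp hrs hdvd hcol

/-- If `g` has no collision then `g ≡ -u (b-u)⁻¹` for some `1 ≤ u ≤ b-1`. -/
lemma gate_collision_form (p b g : ℕ) (hp : p.Prime) (hb : 2 ≤ b) (hbp : b < p)
    (hg1 : 1 ≤ g) (hgp : g < p)
    (hfree : ∀ r, 1 ≤ r → r < p → b * r / p ≠ b * (g * r % p) / p) :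
    ∃ u, 1 ≤ u ∧ u ≤ b - 1 ∧
      (g : ZMod p) = (-(u : ZMod p)) * ((b : ZMod p) - (u : ZMod p))⁻¹ := by
  haveI := Fact.mk hp
  haveI : NeZero p := ⟨hp.pos.ne'⟩
  have hp3 : 3 ≤ p := by omega
  -- g ≠ 1
  have hgne : g ≠ 1 := by
    intro h
    subst h
    have h1 : (1 * 1) % p = 1 := by
      rw [Nat.one_mul, Nat.mod_eq_of_lt (by omega)]
    exact hfree 1 le_rfl (by omega) (by rw [h1])
  have hg0 : (g : ZMod p) ≠ 0 := gate_cast_ne p g (by omega) hgp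
  have hgz1 : (g : ZMod p) ≠ 1 := by
    intro h
    have h2 := congrArg ZMod.val h
    rw [ZMod.val_cast_of_lt hgp] at h2
    have h3 : (1 : ZMod p).val = 1 := by
      rw [show (1 : ZMod p) = ((1 : ℕ) : ZMod p) by norm_num,
        ZMod.val_cast_of_lt (by omega)]
    exact absurd (h2.trans h3) hgne
  have hsub : (g : ZMod p) - 1 ≠ 0 := sub_ne_zero.mpr hgz1
  set x := ((g : ZMod p) - 1)⁻¹ with hxdef
  have hx0 : x ≠ 0 := inv_ne_zero hsub
  have hinv : ((g : ZMod p) - 1) * x = 1 := mul_inv_cancel₀ hsub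
  have hgx : (g : ZMod p) * x = x + 1 := by linear_combination hinv
  set r0 := x.val with hr0def
  have hr0p : r0 < p := ZMod.val_lt x
  have hr00 : r0 ≠ 0 := by rw [hr0def, Ne, ZMod.val_eq_zero]; exact hx0
  have hxr : ((r0 : ℕ) : ZMod p) = x := ZMod.natCast_rightInverse x
  have hx1 : x + 1 ≠ 0 := by rw [← hgx]; exact mul_ne_zero hg0 hx0
  have hr0p2 : r0 + 1 < p := by
    by_contra hcon
    have hre : r0 = p - 1 := by omega
    have : x = -1 := by
      rw [← hxr, hre, Nat.cast_sub (by omega), ZMod.natCast_self, Nat.cast_one, zero_sub]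
    exact hx1 (by rw [this]; ring)
  have hs0 : g * r0 % p = r0 + 1 := by
    have hc : ((g * r0 % p : ℕ) : ZMod p) = ((r0 + 1 : ℕ) : ZMod p) := by
      rw [ZMod.natCast_mod, Nat.cast_mul, hxr, Nat.cast_add, Nat.cast_one, hxr, hgx]
    have h2 := congrArg ZMod.val hc
    rwa [ZMod.val_cast_of_lt (Nat.mod_lt _ hp.pos), ZMod.val_cast_of_lt hr0p2] at h2
  have hne := hfree r0 (by omega) hr0p
  rw [hs0] at hne
  have e1 : (b * r0 / p) * p + b * r0 % p = b * r0 := by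
    rw [Nat.mul_comm]; exact Nat.div_add_mod (b * r0) p
  have l1 : b * r0 % p < p := Nat.mod_lt _ hp.pos
  -- b * r0 % p + b ≥ p
  have hrem : p ≤ b * r0 % p + b := by
    by_contra hcon
    push_neg at hcon
    apply hne
    have hbe : b * (r0 + 1) = b * r0 + b := by ring
    rw [hbe]
    refine (Nat.div_eq_of_lt_le ?_ ?_).symm
    · omega
    · rw [Nat.add_mul, Nat.one_mul]; omega
  have hremcast : ((b * r0 % p : ℕ) : ZMod p) = (b : ZMod p) * x := by
    rw [ZMod.natCast_mod, Nat.cast_mul, hxr]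
  have hbz : (b : ZMod p) ≠ 0 := gate_cast_ne p b (by omega) hbp
  have hremne : b * r0 % p ≠ p - b := by
    intro h
    rw [h, Nat.cast_sub (by omega), ZMod.natCast_self, zero_sub] at hremcast
    have h2 : (b : ZMod p) * x = (b : ZMod p) * (-1) := by rw [← hremcast]; ring
    have h3 : x = -1 := mul_left_cancel₀ hbz h2
    exact hx1 (by rw [h3]; ring)
  set rem := b * r0 % p with hremdef
  have hrange : p - b + 1 ≤ rem ∧ rem ≤ p - 1 := by omega
  refine ⟨b - (p - rem), by omega, by omega, ?_⟩
  have hsum : (((p - rem) + rem : ℕ) : ZMod p) = 0 := by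
    rw [show (p - rem) + rem = p by omega, ZMod.natCast_self]
  push_cast at hsum
  -- key : g * u' = u' - b  where u' = p - rem
  have key : (g : ZMod p) * ((p - rem : ℕ) : ZMod p) =
      ((p - rem : ℕ) : ZMod p) - (b : ZMod p) := by
    linear_combination (-((g : ZMod p) - 1)) * hremcast + ((g : ZMod p) - 1) * hsum +
      (-(b : ZMod p)) * hinv
  have hueq : ((b - (p - rem) : ℕ) : ZMod p) = (b : ZMod p) - ((p - rem : ℕ) : ZMod p) := by
    rw [Nat.cast_sub (by omega)]
  have hU0 : ((p - rem : ℕ) : ZMod p) ≠ 0 := gate_cast_ne p (p - rem) (by omega) (by omega)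
  rw [hueq]
  have h5 : (b : ZMod p) - ((b : ZMod p) - ((p - rem : ℕ) : ZMod p)) =
      ((p - rem : ℕ) : ZMod p) := by ring
  rw [h5]
  rw [eq_comm, neg_mul, neg_eq_iff_eq_neg, mul_inv_eq_iff_eq_mul₀ hU0]
  linear_combination key

theorem gate_width (p b : ℕ) (hp : p.Prime) (hb : 2 ≤ b) (hbp : b < p)
    (hcop : Nat.gcd p b = 1) :
    ((Finset.Icc 1 (p - 1)).filter (fun g =>
        ((Finset.Icc 1 (p - 1)).filter
          (fun r => b * r / p = b * (g * r % p) / p)).card = 0)) =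
      (Finset.Icc 1 (b - 1)).image
        (fun u : ℕ => ((-(u : ZMod p)) * ((b : ZMod p) - (u : ZMod p))⁻¹).val) ∧
    ((Finset.Icc 1 (p - 1)).filter (fun g =>
        ((Finset.Icc 1 (p - 1)).filter
          (fun r => b * r / p = b * (g * r % p) / p)).card = 0)).card = b - 1 := by
  haveI := Fact.mk hp
  haveI : NeZero p := ⟨hp.pos.ne'⟩
  have hp3 : 3 ≤ p := by omega
  have hbz : (b : ZMod p) ≠ 0 := gate_cast_ne p b (by omega) hbp
  have hmain : ((Finset.Icc 1 (p - 1)).filter (fun g =>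
        ((Finset.Icc 1 (p - 1)).filter
          (fun r => b * r / p = b * (g * r % p) / p)).card = 0)) =
      (Finset.Icc 1 (b - 1)).image
        (fun u : ℕ => ((-(u : ZMod p)) * ((b : ZMod p) - (u : ZMod p))⁻¹).val) := by
    ext g
    simp only [Finset.mem_filter, Finset.mem_image, Finset.card_eq_zero,
      Finset.filter_eq_empty_iff]
    constructor
    · rintro ⟨hgmem, hfree⟩
      obtain ⟨hg1, hgp⟩ := Finset.mem_Icc.mp hgmem
      have hfree' : ∀ r, 1 ≤ r → r < p → b * r / p ≠ b * (g * r % p) / p := by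
        intro r h1 h2
        exact hfree (Finset.mem_Icc.mpr ⟨h1, by omega⟩)
      obtain ⟨u, hu1, hub, hgz⟩ :=
        gate_collision_form p b g hp hb hbp hg1 (by omega) hfree'
      exact ⟨u, Finset.mem_Icc.mpr ⟨hu1, hub⟩,
        by rw [← hgz, ZMod.val_cast_of_lt (by omega)]⟩
    · rintro ⟨u, humem, rfl⟩
      obtain ⟨hu1, hub⟩ := Finset.mem_Icc.mp humem
      set e := (-(u : ZMod p)) * ((b : ZMod p) - (u : ZMod p))⁻¹ with hedef
      have hbuz : ((b : ZMod p) - (u : ZMod p)) = ((b - u : ℕ) : ZMod p) :=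
        (Nat.cast_sub (by omega)).symm
      have hbu0 : ((b : ZMod p) - (u : ZMod p)) ≠ 0 := by
        rw [hbuz]; exact gate_cast_ne p (b - u) (by omega) (by omega)
      have he0 : e ≠ 0 :=
        mul_ne_zero (neg_ne_zero.mpr (gate_cast_ne p u (by omega) (by omega)))
          (inv_ne_zero hbu0)
      have hev : ((e.val : ℕ) : ZMod p) = e := ZMod.natCast_rightInverse e
      have hev0 : e.val ≠ 0 := by rw [Ne, ZMod.val_eq_zero]; exact he0
      have hevp : e.val < p := ZMod.val_lt e
      refine ⟨Finset.mem_Icc.mpr ⟨by omega, by omega⟩, ?_⟩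
      intro r hr
      obtain ⟨hr1, hrp⟩ := Finset.mem_Icc.mp hr
      exact gate_no_collision p b u e.val r hp hb hbp hu1 hub (by rw [hev]) (by omega)
        hevp hr1 (by omega)
  refine ⟨hmain, ?_⟩
  rw [hmain, Finset.card_image_of_injOn, Nat.card_Icc]
  · omega
  · intro u hu v hv huv
    have hu' : 1 ≤ u ∧ u ≤ b - 1 := by simpa using hu
    have hv' : 1 ≤ v ∧ v ≤ b - 1 := by simpa using hv
    obtain ⟨hu1, hu2⟩ := hu'
    obtain ⟨hv1, hv2⟩ := hv'
    have h1 : (-(u : ZMod p)) * ((b : ZMod p) - (u : ZMod p))⁻¹ =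
        (-(v : ZMod p)) * ((b : ZMod p) - (v : ZMod p))⁻¹ := by
      calc (-(u : ZMod p)) * ((b : ZMod p) - (u : ZMod p))⁻¹
          = ((((-(u : ZMod p)) * ((b : ZMod p) - (u : ZMod p))⁻¹).val : ℕ) : ZMod p) :=
            (ZMod.natCast_rightInverse _).symm
        _ = ((((-(v : ZMod p)) * ((b : ZMod p) - (v : ZMod p))⁻¹).val : ℕ) : ZMod p) := by
            exact congrArg _ huv
        _ = (-(v : ZMod p)) * ((b : ZMod p) - (v : ZMod p))⁻¹ :=
            ZMod.natCast_rightInverse _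
    have hbu0 : ((b : ZMod p) - (u : ZMod p)) ≠ 0 := by
      rw [(Nat.cast_sub (show u ≤ b by omega)).symm]
      exact gate_cast_ne p (b - u) (by omega) (by omega)
    have hbv0 : ((b : ZMod p) - (v : ZMod p)) ≠ 0 := by
      rw [(Nat.cast_sub (show v ≤ b by omega)).symm]
      exact gate_cast_ne p (b - v) (by omega) (by omega)
    have eU : ((b : ZMod p) - (u : ZMod p))⁻¹ * ((b : ZMod p) - (u : ZMod p)) = 1 :=
      inv_mul_cancel₀ hbu0
    have eV : ((b : ZMod p) - (v : ZMod p))⁻¹ * ((b : ZMod p) - (v : ZMod p)) = 1 :=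
      inv_mul_cancel₀ hbv0
    have h2 : (-(u : ZMod p)) * ((b : ZMod p) - (v : ZMod p)) =
        (-(v : ZMod p)) * ((b : ZMod p) - (u : ZMod p)) := by
      linear_combination (((b : ZMod p) - (u : ZMod p)) * ((b : ZMod p) - (v : ZMod p))) * h1 +
        ((u : ZMod p) * ((b : ZMod p) - (v : ZMod p))) * eU -
        ((v : ZMod p) * ((b : ZMod p) - (u : ZMod p))) * eV
    have h3 : (u : ZMod p) * (b : ZMod p) = (v : ZMod p) * (b : ZMod p) := by
      linear_combination -h2
    have h4 : (u : ZMod p) = (v : ZMod p) := mul_right_cancel₀ hbz h3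
    have h5 := congrArg ZMod.val h4
    rwa [ZMod.val_cast_of_lt (by omega), ZMod.val_cast_of_lt (by omega)] at h5
end

section
/- For b ≥ 2, ℓ ≥ 1, p > b^{ℓ+1} with gcd(p,b)=1, m = b^{ℓ+1}: for each r ∈ {1,...,p-1} with slice index n = ⌊m·r/p⌋, one has ⌊b·((b^ℓ·r) mod p)/p⌋ = n mod b. -/
theorem multiplier_digit_on_slice (b ℓ p : ℕ) (hb : 2 ≤ b) (hℓ : 1 ≤ ℓ)
    (hp : b ^ (ℓ + 1) < p) (hcop : Nat.gcd p b = 1)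
    (r : ℕ) (hr : r ∈ Finset.Icc 1 (p - 1)) :
    b * (b ^ ℓ * r % p) / p = (b ^ (ℓ + 1) * r / p) % b := by
  have hp0 : 0 < p := lt_trans (by positivity) hp
  have key : b ^ (ℓ + 1) * r = b * (b ^ ℓ * r) := by ring
  rw [key]
  set q := b ^ ℓ * r with hq
  have hlt : b * (q % p) / p < b := by
    apply Nat.div_lt_of_lt_mul
    calc b * (q % p) < b * p := by
          exact Nat.mul_lt_mul_of_le_of_lt (le_refl b) (Nat.mod_lt _ hp0) (by omega)
      _ = p * b := by ring
  conv_rhs => rw [← Nat.div_add_mod q p]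
  have h2 : b * (p * (q / p) + q % p) = p * (b * (q / p)) + b * (q % p) := by ring
  rw [h2, Nat.mul_add_div hp0, Nat.mul_add_mod]
  exact (Nat.mod_eq_of_lt hlt).symm
end

section
/- Let b ≥ 2, ℓ ≥ 1, m = b^{ℓ+1}, and let p, p' > m both be coprime to b with p ≡ p' (mod m). Then C_p(b^ℓ mod p) - ⌊(p-1)/b⌋ = C_{p'}(b^ℓ mod p') - ⌊(p'-1)/b⌋, where C_p(g) = #{r ∈ {1,...,p-1} : ⌊b·r/p⌋ = ⌊b·(g·r mod p)/p⌋}. -/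
/-!
Put `m = b ^ (ℓ + 1)`. The two digits compared in `C_p` are the first and the last of the
`ℓ + 1` base-`b` digits of `⌊m r / p⌋`, so `C_p + 1` counts the `r < p` for which `⌊m r / p⌋`
lies in the set `T` of such digit strings with equal ends, and `#T = b ^ ℓ`. The fibre of
`r ↦ ⌊m r / p⌋` over `t < m` is an interval with ceiling endpoints `⌈t p / m⌉`, and writing
`p = m q + ρ` shows it has `q` more elements than the same fibre for `ρ`. Hence
`C_p = b ^ ℓ q + C_ρ`, while `⌊(p - 1) / b⌋ = b ^ ℓ q + ⌊(ρ - 1) / b⌋` because `b ∤ p`; the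
difference depends only on `ρ = p mod m`.
-/

open Finset

namespace Nat

lemma lt_ceilDiv_iff_mul_lt {m y r : ℕ} (hm : 0 < m) : r < y ⌈/⌉ m ↔ m * r < y := by
  simpa only [not_le] using (ceilDiv_le_iff_le_mul hm (b := y) (c := r)).not

lemma mul_add_ceilDiv {m : ℕ} (hm : 0 < m) (k y : ℕ) : (m * k + y) ⌈/⌉ m = k + y ⌈/⌉ m := by
  rw [ceilDiv_eq_add_pred_div, ceilDiv_eq_add_pred_div, Nat.add_sub_assoc hm,
    Nat.add_sub_assoc hm, Nat.add_assoc, Nat.mul_add_div hm]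

lemma mul_mod_div_eq_mul_div_mod (b x p : ℕ) : b * (x % p) / p = b * x / p % b := by
  rcases Nat.eq_zero_or_pos p with rfl | hp
  · simp
  rcases Nat.eq_zero_or_pos b with rfl | hb
  · simp
  have hlt : b * (x % p) / p < b :=
    (Nat.div_lt_iff_lt_mul hp).2 (Nat.mul_lt_mul_of_pos_left (Nat.mod_lt x hp) hb)
  conv_rhs => rw [← Nat.div_add_mod x p, Nat.mul_add, Nat.mul_left_comm, Nat.mul_add_div hp,
    Nat.mul_add_mod, Nat.mod_eq_of_lt hlt]

lemma pred_div_eq_mul_div_add {b c p : ℕ} (hb : 0 < b) (hp : 0 < p % (b * c)) :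
    (p - 1) / b = c * (p / (b * c)) + (p % (b * c) - 1) / b := by
  have hsplit : p - 1 = b * (c * (p / (b * c))) + (p % (b * c) - 1) := by
    have := Nat.div_add_mod p (b * c)
    rw [Nat.mul_assoc] at this
    omega
  rw [hsplit, Nat.mul_add_div hb]

end Nat

lemma range_filter_mul_div_eq {m p t : ℕ} (hm : 0 < m) (ht : t < m) :
    {r ∈ range p | m * r / p = t} = Ico (t * p ⌈/⌉ m) ((t + 1) * p ⌈/⌉ m) := by
  rcases Nat.eq_zero_or_pos p with rfl | hp
  · simp
  have hdiv : ∀ r, m * r / p = t ↔ t * p ≤ m * r ∧ m * r < (t + 1) * p := fun r => by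
    rw [← Nat.le_div_iff_mul_le hp, ← Nat.div_lt_iff_lt_mul hp]; omega
  have hbound : (t + 1) * p ≤ m * p := Nat.mul_le_mul_right p ht
  ext r
  simp only [mem_filter, mem_range, mem_Ico, ceilDiv_le_iff_le_mul hm,
    Nat.lt_ceilDiv_iff_mul_lt hm, hdiv]
  exact ⟨fun h => h.2, fun h => ⟨Nat.lt_of_mul_lt_mul_left (h.2.trans_le hbound), h⟩⟩

lemma card_range_filter_mul_div_eq {m p t : ℕ} (hm : 0 < m) (ht : t < m) :
    #{r ∈ range p | m * r / p = t} = p / m + #{r ∈ range (p % m) | m * r / (p % m) = t} := by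
  have hceil : ∀ x, x * p ⌈/⌉ m = x * (p / m) + x * (p % m) ⌈/⌉ m := fun x => by
    rw [← Nat.mul_add_ceilDiv hm]
    congr 1
    conv_lhs => rw [← Nat.div_add_mod p m]
    ring
  have hmono : t * (p % m) ⌈/⌉ m ≤ (t + 1) * (p % m) ⌈/⌉ m :=
    (gc_mul_ceilDiv hm).monotone_l (Nat.mul_le_mul_right _ t.le_succ)
  rw [range_filter_mul_div_eq hm ht, range_filter_mul_div_eq hm ht, Nat.card_Ico, Nat.card_Ico,
    hceil, hceil, Nat.add_mul]
  omega

lemma card_range_filter_eq_sum {m p : ℕ} (hm : 0 < m) (P : ℕ → Prop) [DecidablePred P] :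
    #{r ∈ range p | P (m * r / p)} = ∑ t ∈ range m with P t, #{r ∈ range p | m * r / p = t} := by
  rw [card_eq_sum_card_fiberwise (f := fun r => m * r / p) (t := {t ∈ range m | P t})]
  · refine sum_congr rfl fun t ht => ?_
    rw [filter_filter]
    refine congrArg card (filter_congr fun r _ => ?_)
    exact ⟨fun h => h.2, fun h => ⟨h ▸ (mem_filter.1 ht).2, h⟩⟩
  · intro r hr
    obtain ⟨hrp, hP⟩ := mem_filter.1 hr
    refine mem_filter.2 ⟨mem_range.2 (Nat.div_lt_of_lt_mul ?_), hP⟩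
    rw [Nat.mul_comm p]
    exact Nat.mul_lt_mul_of_pos_left (mem_range.1 hrp) hm

lemma card_range_filter_mul_div_mod {m p : ℕ} (hm : 0 < m) (P : ℕ → Prop) [DecidablePred P] :
    #{r ∈ range p | P (m * r / p)} =
      #{t ∈ range m | P t} * (p / m) + #{r ∈ range (p % m) | P (m * r / (p % m))} := by
  rw [card_range_filter_eq_sum hm, card_range_filter_eq_sum hm, card_eq_sum_ones, sum_mul,
    ← sum_add_distrib]
  refine sum_congr rfl fun t ht => ?_
  rw [card_range_filter_mul_div_eq hm (mem_range.1 (mem_filter.1 ht).1)]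
  ring

def collisionCount (b ℓ p : ℕ) : ℕ :=
  #{r ∈ Icc 1 (p - 1) | b * r / p = b * (b ^ ℓ % p * r % p) / p}

lemma collision_iff_div_pow_eq_mod (b ℓ p r : ℕ) (hb : 0 < b) :
    b * r / p = b * (b ^ ℓ % p * r % p) / p ↔
      b ^ (ℓ + 1) * r / p / b ^ ℓ = b ^ (ℓ + 1) * r / p % b := by
  have hfirst : b ^ (ℓ + 1) * r / p / b ^ ℓ = b * r / p := by
    rw [Nat.div_div_eq_div_mul, pow_succ', Nat.mul_right_comm,
      Nat.mul_div_mul_right _ _ (Nat.pow_pos hb)]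
  rw [hfirst, Nat.mod_mul_mod, Nat.mul_mod_div_eq_mul_div_mod, ← Nat.mul_assoc, ← pow_succ']

lemma collisionCount_add_one {b p : ℕ} (ℓ : ℕ) (hb : 0 < b) (hp : 0 < p) :
    collisionCount b ℓ p + 1 =
      #{r ∈ range p | b ^ (ℓ + 1) * r / p / b ^ ℓ = b ^ (ℓ + 1) * r / p % b} := by
  have hrange : range p = insert 0 (Icc 1 (p - 1)) := by
    ext r; simp only [mem_range, mem_insert, mem_Icc]; omega
  rw [collisionCount, hrange, filter_insert, if_pos (by simp), card_insert_of_notMem (by simp)]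
  congr 2
  exact filter_congr fun r _ => collision_iff_div_pow_eq_mod b ℓ p r hb

lemma card_range_filter_div_pow_eq_mod {b ℓ : ℕ} (hb : 0 < b) (hℓ : 1 ≤ ℓ) :
    #{t ∈ range (b ^ (ℓ + 1)) | t / b ^ ℓ = t % b} = b ^ ℓ := by
  have hbℓ : 0 < b ^ ℓ := Nat.pow_pos hb
  have hdvd : b ∣ b ^ ℓ := dvd_pow_self b (by omega)
  refine (card_nbij' (· % b ^ ℓ) (fun s => s % b * b ^ ℓ + s) ?_ ?_ ?_ ?_).trans (card_range _)
  · intro t _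
    exact mem_range.2 (Nat.mod_lt t hbℓ)
  · intro s hs
    have hs : s < b ^ ℓ := mem_range.1 hs
    have hlow : (s % b * b ^ ℓ + s) / b ^ ℓ = s % b := by
      rw [Nat.add_comm, Nat.add_mul_div_right _ _ hbℓ, Nat.div_eq_of_lt hs, Nat.zero_add]
    have hhigh : (s % b * b ^ ℓ + s) % b = s % b := by
      rw [Nat.add_mod, Nat.mod_eq_zero_of_dvd (Dvd.dvd.mul_left hdvd _), Nat.zero_add, Nat.mod_mod]
    have hlt : s % b * b ^ ℓ + s < b ^ (ℓ + 1) :=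
      calc s % b * b ^ ℓ + s < (s % b + 1) * b ^ ℓ := by rw [Nat.succ_mul]; omega
        _ ≤ b * b ^ ℓ := Nat.mul_le_mul_right _ (Nat.mod_lt s hb)
        _ = b ^ (ℓ + 1) := (pow_succ' b ℓ).symm
    exact mem_filter.2 ⟨mem_range.2 hlt, hlow.trans hhigh.symm⟩
  · intro t ht
    change t % b ^ ℓ % b * b ^ ℓ + t % b ^ ℓ = t
    rw [Nat.mod_mod_of_dvd t hdvd, ← (mem_filter.1 ht).2, Nat.div_add_mod']
  · intro s hs
    change (s % b * b ^ ℓ + s) % b ^ ℓ = s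
    rw [Nat.mul_add_mod_self_right, Nat.mod_eq_of_lt (mem_range.1 hs)]

lemma collisionCount_eq_mod {b ℓ p : ℕ} (hb : 0 < b) (hℓ : 1 ≤ ℓ) (hρ : 0 < p % b ^ (ℓ + 1)) :
    collisionCount b ℓ p = b ^ ℓ * (p / b ^ (ℓ + 1)) + collisionCount b ℓ (p % b ^ (ℓ + 1)) := by
  have hp : 0 < p := Nat.pos_of_ne_zero fun h => by simp [h] at hρ
  have hperiod := card_range_filter_mul_div_mod (m := b ^ (ℓ + 1)) (p := p) (Nat.pow_pos hb)
    (fun n => n / b ^ ℓ = n % b)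
  beta_reduce at hperiod
  rw [card_range_filter_div_pow_eq_mod hb hℓ, ← collisionCount_add_one ℓ hb hp,
    ← collisionCount_add_one ℓ hb hρ] at hperiod
  omega

lemma collisionCount_sub_pred_div_eq_mod {b ℓ p : ℕ} (hb : 2 ≤ b) (hℓ : 1 ≤ ℓ)
    (hcop : Nat.gcd p b = 1) :
    (collisionCount b ℓ p : ℤ) - ((p - 1) / b : ℕ) =
      (collisionCount b ℓ (p % b ^ (ℓ + 1)) : ℤ) - ((p % b ^ (ℓ + 1) - 1) / b : ℕ) := by
  have hρ : 0 < p % b ^ (ℓ + 1) := by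
    refine Nat.pos_of_ne_zero fun h => ?_
    have hbp : b ∣ p := (dvd_pow_self b ℓ.succ_ne_zero).trans (Nat.dvd_of_mod_eq_zero h)
    have := (Nat.coprime_comm.1 hcop).eq_one_of_dvd hbp
    omega
  have hpred := Nat.pred_div_eq_mul_div_add (b := b) (c := b ^ ℓ) (p := p) (by omega)
    (by rwa [← pow_succ'])
  rw [← pow_succ'] at hpred
  rw [collisionCount_eq_mod (by omega) hℓ hρ, hpred]
  push_cast
  ring

theorem finite_determination_general (b ℓ p p' : ℕ) (hb : 2 ≤ b) (hℓ : 1 ≤ ℓ)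
    (hcop : Nat.gcd p b = 1) (hcop' : Nat.gcd p' b = 1)
    (hcong : p % b ^ (ℓ + 1) = p' % b ^ (ℓ + 1)) :
    ((((Finset.Icc 1 (p - 1)).filter
        (fun r => b * r / p = b * (b ^ ℓ % p * r % p) / p)).card : ℤ)
      - ((p - 1) / b : ℕ)) =
    ((((Finset.Icc 1 (p' - 1)).filter
        (fun r => b * r / p' = b * (b ^ ℓ % p' * r % p') / p')).card : ℤ)
      - ((p' - 1) / b : ℕ)) := by
  have h := collisionCount_sub_pred_div_eq_mod hb hℓ hcop
  have h' := collisionCount_sub_pred_div_eq_mod hb hℓ hcop'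
  rw [hcong] at h
  exact h.trans h'.symm

theorem finite_determination (b ℓ p p' : ℕ) (hb : 2 ≤ b) (hℓ : 1 ≤ ℓ)
    (hp : b ^ (ℓ + 1) < p) (hp' : b ^ (ℓ + 1) < p')
    (hcop : Nat.gcd p b = 1) (hcop' : Nat.gcd p' b = 1)
    (hcong : p % b ^ (ℓ + 1) = p' % b ^ (ℓ + 1)) :
    ((((Finset.Icc 1 (p - 1)).filter
        (fun r => b * r / p = b * (b ^ ℓ % p * r % p) / p)).card : ℤ)
      - ((p - 1) / b : ℕ)) =
    ((((Finset.Icc 1 (p' - 1)).filter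
        (fun r => b * r / p' = b * (b ^ ℓ % p' * r % p') / p')).card : ℤ)
      - ((p' - 1) / b : ℕ)) :=
  finite_determination_general b ℓ p p' hb hℓ hcop hcop' hcong
end

section
/- Let b ≥ 2, ℓ ≥ 1, m = b^{ℓ+1}, G = {n ∈ [0,m) : ⌊n/b^ℓ⌋ = n mod b}, and let p > m with gcd(p,b)=1. Then C(b^ℓ mod p) = -1 + Σ_{n ∈ G} (⌊(n+1)p/m⌋ - ⌊n·p/m⌋), where C(g) = #{r ∈ {1,...,p-1} : ⌊b·r/p⌋ = ⌊b·(g·r mod p)/p⌋}. -/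
/-!
Write `m = b^(ℓ+1)`. For `0 < r < p`, `⌊b r / p⌋` and `⌊b (b^ℓ r mod p) / p⌋` are the leading
and the last base-`b` digit of the `(ℓ+1)`-digit number `N(r) = ⌊m r / p⌋`, so `r` is a
collision exactly when `N(r)` is a good slice. The fibres of `k ↦ ⌊(k m - 1) / p⌋` on `[1, p]`
are the intervals `(⌊n p / m⌋, ⌊(n + 1) p / m⌋]`; as `p` is coprime to `m`, this map agrees
with `N` for `k < p`, and the extra point `k = p` lands in the good slice `m - 1`, whence the
`-1`.
-/

open Finset

section FloorFibers

variable {m p : ℕ}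

theorem sub_one_div_eq_iff_mem_Ioc (hm : 0 < m) (hp : 0 < p) {k n : ℕ} (hk : 1 ≤ k) :
    (k * m - 1) / p = n ↔ k ∈ Ioc (n * p / m) ((n + 1) * p / m) := by
  have hkm : 1 ≤ k * m := Nat.one_le_iff_ne_zero.mpr (by positivity)
  have hsucc : (n + 1) * p = n * p + p := by ring
  rw [Nat.div_eq_iff hp, mem_Ioc, Nat.div_lt_iff_lt_mul hm, Nat.le_div_iff_mul_le hm]
  omega

theorem filter_Icc_sub_one_div_eq_Ioc (hm : 0 < m) (hp : 0 < p) {n : ℕ} (hn : n < m) :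
    {k ∈ Icc 1 p | (k * m - 1) / p = n} = Ioc (n * p / m) ((n + 1) * p / m) := by
  ext k
  rw [mem_filter, mem_Icc]
  constructor
  · rintro ⟨⟨hk, -⟩, hkn⟩
    exact (sub_one_div_eq_iff_mem_Ioc hm hp hk).1 hkn
  · intro hk
    obtain ⟨hk₁, hk₂⟩ := mem_Ioc.1 hk
    have hkp : k ≤ p :=
      calc k ≤ (n + 1) * p / m := hk₂
        _ ≤ m * p / m := Nat.div_le_div_right (Nat.mul_le_mul_right p hn)
        _ = p := Nat.mul_div_cancel_left p hm
    have hk₀ : 1 ≤ k := Nat.one_le_iff_ne_zero.2 (by rintro rfl; simp at hk₁)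
    exact ⟨⟨hk₀, hkp⟩, (sub_one_div_eq_iff_mem_Ioc hm hp hk₀).2 hk⟩

theorem card_filter_Icc_sub_one_div_mem (hm : 0 < m) (hp : 0 < p) {S : Finset ℕ}
    (hS : ∀ n ∈ S, n < m) :
    (#{k ∈ Icc 1 p | (k * m - 1) / p ∈ S} : ℤ) =
      ∑ n ∈ S, (((n + 1) * p / m : ℕ) - (n * p / m : ℕ) : ℤ) := by
  rw [card_eq_sum_card_fiberwise (s := {k ∈ Icc 1 p | (k * m - 1) / p ∈ S}) (t := S)
    fun k hk => (mem_filter.1 hk).2, Nat.cast_sum]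
  refine sum_congr rfl fun n hn => ?_
  have hle : n * p / m ≤ (n + 1) * p / m := Nat.div_le_div_right (by gcongr; omega)
  rw [filter_filter, filter_congr fun k _ => and_iff_right_of_imp (· ▸ hn),
    filter_Icc_sub_one_div_eq_Ioc hm hp (hS n hn), Nat.card_Ioc, Nat.cast_sub hle]

theorem sub_one_div_eq_div_of_not_dvd {a : ℕ} (h : ¬p ∣ a) : (a - 1) / p = a / p := by
  obtain _ | a := a
  · exact absurd (dvd_zero p) h
  · rw [Nat.succ_div, if_neg h, add_zero, Nat.add_sub_cancel]

theorem card_filter_Icc_sub_one_div_mem_eq (hp : 0 < p) (hcop : Nat.Coprime p m)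
    {S : Finset ℕ} (hS : m - 1 ∈ S) :
    #{k ∈ Icc 1 p | (k * m - 1) / p ∈ S} = #{k ∈ Icc 1 (p - 1) | k * m / p ∈ S} + 1 := by
  have htop : (p * m - 1) / p = m - 1 := by
    rcases m with _ | m
    · simp
    · rw [Nat.add_sub_cancel, mul_add, mul_one, Nat.add_sub_assoc hp, Nat.mul_add_div hp,
        Nat.div_eq_of_lt (by omega), add_zero]
  rw [← insert_Icc_sub_one_right_eq_Icc hp, filter_insert, if_pos (htop ▸ hS),
    card_insert_of_notMem (by simp; omega)]
  congr 1
  refine congrArg card <| filter_congr fun k hk => ?_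
  rw [mem_Icc] at hk
  have hndvd : ¬p ∣ k * m := fun h => by
    have := Nat.le_of_dvd (by omega) (hcop.dvd_of_dvd_mul_right h)
    omega
  rw [sub_one_div_eq_div_of_not_dvd hndvd]

end FloorFibers

theorem mul_mod_div_eq_mul_div_mod (b x : ℕ) {p : ℕ} (hp : 0 < p) :
    b * (x % p) / p = b * x / p % b := by
  rcases b.eq_zero_or_pos with rfl | hb
  · simp
  have hlt : b * (x % p) / p < b :=
    (Nat.div_lt_iff_lt_mul hp).2 ((Nat.mul_lt_mul_left hb).2 (Nat.mod_lt x hp))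
  conv_rhs => rw [← Nat.div_add_mod x p, mul_add, mul_left_comm, Nat.mul_add_div hp,
    Nat.mul_add_mod, Nat.mod_eq_of_lt hlt]

def goodSlices (b ℓ : ℕ) : Finset ℕ := {n ∈ range (b ^ (ℓ + 1)) | n / b ^ ℓ = n % b}

section GoodSlices

variable {b ℓ : ℕ}

theorem lt_of_mem_goodSlices {n : ℕ} (hn : n ∈ goodSlices b ℓ) : n < b ^ (ℓ + 1) :=
  mem_range.1 (mem_filter.1 hn).1

theorem pow_succ_sub_one_mem_goodSlices (hb : 0 < b) : b ^ (ℓ + 1) - 1 ∈ goodSlices b ℓ := by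
  have hpow : 0 < b ^ ℓ := by positivity
  have hdiv : b ^ (ℓ + 1) - 1 = b ^ ℓ * (b - 1) + (b ^ ℓ - 1) := by
    rw [pow_succ, Nat.mul_sub_one]
    have := Nat.le_mul_of_pos_right (b ^ ℓ) hb
    omega
  have hmod : b ^ (ℓ + 1) - 1 = b * (b ^ ℓ - 1) + (b - 1) := by
    rw [pow_succ', Nat.mul_sub_one]
    have := Nat.le_mul_of_pos_right b hpow
    omega
  refine mem_filter.2 ⟨mem_range.2 (Nat.sub_lt (by positivity) one_pos), ?_⟩
  rw [hdiv, Nat.mul_add_div hpow, Nat.div_eq_of_lt (by omega), add_zero, ← hdiv, hmod,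
    Nat.mul_add_mod, Nat.mod_eq_of_lt (by omega)]

theorem div_eq_mod_div_iff_mem_goodSlices (hb : 0 < b) {p r : ℕ} (hp : 0 < p) (hr : r < p) :
    b * r / p = b * (b ^ ℓ % p * r % p) / p ↔ r * b ^ (ℓ + 1) / p ∈ goodSlices b ℓ := by
  have hlead : b * r / p = r * b ^ (ℓ + 1) / p / b ^ ℓ := by
    rw [Nat.div_div_eq_div_mul, pow_succ, show r * (b ^ ℓ * b) = b ^ ℓ * (b * r) by ring,
      mul_comm p, Nat.mul_div_mul_left _ _ (by positivity)]
  have hlast : b * (b ^ ℓ % p * r % p) / p = r * b ^ (ℓ + 1) / p % b := by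
    rw [Nat.mod_mul_mod, mul_mod_div_eq_mul_div_mod _ _ hp, pow_succ',
      show r * (b * b ^ ℓ) = b * (b ^ ℓ * r) by ring]
  have hlt : r * b ^ (ℓ + 1) / p < b ^ (ℓ + 1) :=
    (Nat.div_lt_iff_lt_mul hp).2 <| by
      rw [mul_comm]; exact Nat.mul_lt_mul_of_pos_left hr (by positivity)
  rw [hlead, hlast, goodSlices, mem_filter, mem_range]
  exact (and_iff_right hlt).symm

end GoodSlices

theorem collision_good_slice_formula_general (b ℓ p : ℕ) (hb : 2 ≤ b)
    (hcop : Nat.gcd p b = 1) :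
    ((((Finset.Icc 1 (p - 1)).filter
        (fun r => b * r / p = b * (b ^ ℓ % p * r % p) / p)).card : ℤ)) =
    -1 + ∑ n ∈ (Finset.range (b ^ (ℓ + 1))).filter (fun n => n / b ^ ℓ = n % b),
      (((n + 1) * p / b ^ (ℓ + 1) : ℕ) - (n * p / b ^ (ℓ + 1) : ℕ) : ℤ) := by
  have hp : 0 < p := Nat.pos_of_ne_zero fun h => by simp [h] at hcop; omega
  have hb₀ : 0 < b := by omega
  have hcollision := filter_congr (s := Icc 1 (p - 1)) fun r hr =>
    div_eq_mod_div_iff_mem_goodSlices (ℓ := ℓ) hb₀ hp (r := r) (by rw [mem_Icc] at hr; omega)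
  have hcount := card_filter_Icc_sub_one_div_mem (m := b ^ (ℓ + 1)) (by positivity) hp
    fun _ => lt_of_mem_goodSlices (b := b) (ℓ := ℓ)
  rw [card_filter_Icc_sub_one_div_mem_eq hp (Nat.Coprime.pow_right _ hcop)
    (pow_succ_sub_one_mem_goodSlices hb₀)] at hcount
  rw [hcollision]
  change _ = -1 + ∑ n ∈ goodSlices b ℓ, _
  rw [Nat.cast_add, Nat.cast_one] at hcount
  linarith

theorem collision_good_slice_formula (b ℓ p : ℕ) (hb : 2 ≤ b) (hℓ : 1 ≤ ℓ)
    (hp : b ^ (ℓ + 1) < p) (hcop : Nat.gcd p b = 1) :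
    ((((Finset.Icc 1 (p - 1)).filter
        (fun r => b * r / p = b * (b ^ ℓ % p * r % p) / p)).card : ℤ)) =
    -1 + ∑ n ∈ (Finset.range (b ^ (ℓ + 1))).filter (fun n => n / b ^ ℓ = n % b),
      (((n + 1) * p / b ^ (ℓ + 1) : ℕ) - (n * p / b ^ (ℓ + 1) : ℕ) : ℤ) :=
  collision_good_slice_formula_general b ℓ p hb hcop
end

section
/- Let b ≥ 2, ℓ ≥ 1, m = b^{ℓ+1}, G the good-slice set, and define S(a) = -1 - ⌊a/b⌋ + Σ_{n ∈ G}(⌊(n+1)a/m⌋ - ⌊n·a/m⌋) for 1 ≤ a < m with gcd(a, m) = 1. Then for any p > m with gcd(p,b)=1 and p ≡ a (mod m), C(b^ℓ mod p) - ⌊(p-1)/b⌋ = S(a). -/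
/-!
Put `m = b * L` with `L = b ^ ℓ`. For `0 < r < p` the number `N = ⌊m r / p⌋` is made of the
first `ℓ + 1` base-`b` digits of `r / p`: `⌊b r / p⌋` is its leading digit `N / L`, and
`⌊b (L r mod p) / p⌋` is its last digit `N mod b`, so `C` counts the `r` with `N ∈ G`.
Since `p` is prime to `m`, `N = ⌊(m r - 1) / p⌋` for `0 < r < p`; in this shifted form the fibre
over `n` is the interval `(n p / m, (n + 1) p / m]`, and the extra point `r = p` lands in the top
slice `m - 1 ∈ G`, which is the `-1`. Finally `p = m Q + a` splits each fibre length into `Q`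
plus the corresponding difference for `a`, with `|G| = L`, while `⌊(p - 1) / b⌋ = L Q + ⌊a / b⌋`.
-/

open Finset

namespace Nat

lemma sub_one_div_of_not_dvd {x p : ℕ} (h : ¬ p ∣ x) : (x - 1) / p = x / p := by
  obtain ⟨y, rfl⟩ : ∃ y, x = y + 1 := exists_eq_add_one.mpr <| pos_of_ne_zero <| by
    rintro rfl; exact h (dvd_zero p)
  exact (succ_div_of_not_dvd h).symm

lemma mul_div_eq_mul_div_add_mul_mod_div (k p m : ℕ) :
    k * p / m = k * (p / m) + k * (p % m) / m := by
  rcases m.eq_zero_or_pos with rfl | hm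
  · simp
  conv_lhs => rw [← div_add_mod p m, mul_add, mul_left_comm, mul_add_div hm]

end Nat

def goodSlice (b L : ℕ) : Finset ℕ := (range (b * L)).filter (fun n => n / L = n % b)

lemma div_eq_mul_mod_div_iff_mem_goodSlice {b L p r : ℕ} (hb : 0 < b) (hL : 0 < L)
    (hLp : L < p) (hr : r < p) :
    b * r / p = b * (L % p * r % p) / p ↔ b * L * r / p ∈ goodSlice b L := by
  have hp : 0 < p := hL.trans hLp
  have hlead : b * L * r / p / L = b * r / p := by
    rw [Nat.div_div_eq_div_mul, mul_right_comm, Nat.mul_div_mul_right _ _ hL]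
  have hlt : b * L * r / p < b * L :=
    (Nat.div_lt_iff_lt_mul hp).2 (Nat.mul_lt_mul_of_pos_left hr (by positivity))
  rw [Nat.mod_eq_of_lt hLp, Nat.mul_mod_div_eq_mul_div_mod, ← mul_assoc, goodSlice, mem_filter,
    mem_range, hlead]
  exact ⟨fun h => ⟨hlt, h⟩, And.right⟩

lemma card_goodSlice {b L : ℕ} (hL : 0 < L) (hbL : b ∣ L) : #(goodSlice b L) = L := by
  have hb : 0 < b := Nat.pos_of_dvd_of_pos hbL hL
  have hmod (i : ℕ) : (i % b * L + i) % b = i % b := by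
    rw [Nat.add_mod, Nat.dvd_iff_mod_eq_zero.mp (dvd_mul_of_dvd_right hbL _), zero_add,
      Nat.mod_mod]
  refine (card_nbij' (· % L) (fun i => i % b * L + i) ?_ ?_ ?_ ?_).trans (card_range L)
  · intro n _
    simp [Nat.mod_lt n hL]
  · intro i hi
    simp only [coe_range, Set.mem_Iio] at hi
    have hdiv : (i % b * L + i) / L = i % b := by
      rw [add_comm, Nat.add_mul_div_right _ _ hL, Nat.div_eq_of_lt hi, zero_add]
    simp only [goodSlice, coe_filter, mem_range, Set.mem_ofPred_eq, hdiv, hmod, and_true]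
    nlinarith [Nat.mod_lt i hb]
  · intro n hn
    simp only [goodSlice, coe_filter, mem_range, Set.mem_ofPred_eq] at hn
    simp only [Nat.mod_mod_of_dvd n hbL, ← hn.2, Nat.div_add_mod']
  · intro i hi
    simp only [coe_range, Set.mem_Iio] at hi
    simp [Nat.mod_eq_of_lt hi]

lemma sub_one_mem_goodSlice {b L : ℕ} (hb : 0 < b) (hL : 0 < L) :
    b * L - 1 ∈ goodSlice b L := by
  have hbL : L ≤ b * L := Nat.le_mul_of_pos_left L hb
  have hLb : b ≤ b * L := Nat.le_mul_of_pos_right b hL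
  have hdiv : (b * L - 1) / L = b - 1 := by
    rw [Nat.div_eq_iff hL, Nat.sub_one_mul]
    omega
  have hmod : (b * L - 1) % b = b - 1 := by
    rw [show b * L - 1 = b * (L - 1) + (b - 1) by rw [Nat.mul_sub_one]; omega, Nat.mul_add_mod,
      Nat.mod_eq_of_lt (by omega)]
  simp only [goodSlice, mem_filter, mem_range, hdiv, hmod, and_true]
  omega

lemma filter_Icc_mul_sub_one_div_eq {m p n : ℕ} (hp : 0 < p) (hn : n < m) :
    {r ∈ Icc 1 p | (m * r - 1) / p = n} = Ioc (n * p / m) ((n + 1) * p / m) := by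
  have hm : 0 < m := n.zero_le.trans_lt hn
  have hnm : (n + 1) * p ≤ m * p := Nat.mul_le_mul_right p hn
  ext r
  simp only [mem_filter, mem_Icc, mem_Ioc, Nat.div_lt_iff_lt_mul hm, Nat.le_div_iff_mul_le hm,
    Nat.div_eq_iff hp, mul_comm r m, add_mul, one_mul] at hnm ⊢
  constructor
  · rintro ⟨⟨hr, -⟩, hlo, hhi⟩
    have : 0 < m * r := by positivity
    omega
  · rintro ⟨hlo, hhi⟩
    have hr : 0 < r := Nat.pos_of_ne_zero (by rintro rfl; omega)
    have hrp : r ≤ p := Nat.le_of_mul_le_mul_left (hhi.trans hnm) hm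
    omega

lemma card_filter_Icc_mul_sub_one_div_mem {m p : ℕ} {G : Finset ℕ} (hp : 0 < p)
    (hG : G ⊆ range m) :
    (#{r ∈ Icc 1 p | (m * r - 1) / p ∈ G} : ℤ) =
      ∑ n ∈ G, (((n + 1) * p / m : ℕ) - (n * p / m : ℕ) : ℤ) := by
  rw [card_eq_sum_card_fiberwise (s := {r ∈ Icc 1 p | (m * r - 1) / p ∈ G}) (t := G)
    (f := fun r => (m * r - 1) / p) fun r hr => (mem_filter.1 hr).2, Nat.cast_sum]
  refine sum_congr rfl fun n hn => ?_
  have hfiber : {r ∈ {r ∈ Icc 1 p | (m * r - 1) / p ∈ G} | (m * r - 1) / p = n} =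
      {r ∈ Icc 1 p | (m * r - 1) / p = n} := by
    rw [filter_filter]
    exact filter_congr fun r _ => and_iff_right_of_imp fun h => h ▸ hn
  rw [hfiber, filter_Icc_mul_sub_one_div_eq hp (mem_range.1 (hG hn)), Nat.card_Ioc,
    Nat.cast_sub (Nat.div_le_div_right (Nat.mul_le_mul_right p n.le_succ))]

lemma card_filter_Icc_mul_div_mem_add_one {m p : ℕ} {G : Finset ℕ} (hp : 0 < p)
    (hcop : p.Coprime m) (hG : m - 1 ∈ G) :
    #{r ∈ Icc 1 (p - 1) | m * r / p ∈ G} + 1 = #{r ∈ Icc 1 p | (m * r - 1) / p ∈ G} := by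
  have hIcc : Icc 1 p = insert p (Icc 1 (p - 1)) := by
    ext r; simp only [mem_insert, mem_Icc]; omega
  have htop : (m * p - 1) / p = m - 1 := by
    rw [Nat.div_eq_iff hp, Nat.sub_one_mul]
    rcases m.eq_zero_or_pos with rfl | hm
    · simp
    · have := Nat.le_mul_of_pos_left p hm
      omega
  rw [hIcc, filter_insert, if_pos (htop ▸ hG),
    card_insert_of_notMem (by simp only [mem_filter, mem_Icc]; omega)]
  congr 2
  refine filter_congr fun r hr => ?_
  have hr := mem_Icc.1 hr
  have hndvd : ¬ p ∣ m * r := fun h =>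
    absurd (Nat.le_of_dvd (by omega) (hcop.dvd_of_dvd_mul_left h)) (by omega)
  rw [Nat.sub_one_div_of_not_dvd hndvd]

lemma sum_mul_div_sub_mul_div (G : Finset ℕ) (p m : ℕ) :
    ∑ n ∈ G, (((n + 1) * p / m : ℕ) - (n * p / m : ℕ) : ℤ) =
      #G * (p / m : ℕ) +
        ∑ n ∈ G, (((n + 1) * (p % m) / m : ℕ) - (n * (p % m) / m : ℕ) : ℤ) := by
  simp only [Nat.mul_div_eq_mul_div_add_mul_mod_div _ p m, ← nsmul_eq_mul, ← sum_const,
    ← sum_add_distrib]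
  refine sum_congr rfl fun n _ => ?_
  push_cast
  ring

theorem deviation_formula_general (b ℓ p a : ℕ) (hb : 2 ≤ b) (hℓ : 1 ≤ ℓ)
    (hp : b ^ (ℓ + 1) < p) (hcop : Nat.gcd p b = 1)
    (hcong : p % b ^ (ℓ + 1) = a) :
    ((((Finset.Icc 1 (p - 1)).filter
        (fun r => b * r / p = b * (b ^ ℓ % p * r % p) / p)).card : ℤ)
      - ((p - 1) / b : ℕ)) =
    -1 - (a / b : ℕ)
      + ∑ n ∈ (Finset.range (b ^ (ℓ + 1))).filter (fun n => n / b ^ ℓ = n % b),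
        (((n + 1) * a / b ^ (ℓ + 1) : ℕ) - (n * a / b ^ (ℓ + 1) : ℕ) : ℤ) := by
  subst hcong
  rw [pow_succ'] at hp ⊢
  set L := b ^ ℓ
  have hb0 : 0 < b := by omega
  have hL : 0 < L := by positivity
  have hLp : L < p := (Nat.le_mul_of_pos_left L hb0).trans_lt hp
  have hp0 : 0 < p := hL.trans hLp
  have hcopm : p.Coprime (b * L) := Nat.Coprime.mul_right hcop (Nat.Coprime.pow_right ℓ hcop)
  have hbp : ¬ b ∣ p := fun h =>
    absurd (Nat.Coprime.eq_one_of_dvd (Nat.Coprime.symm hcop) h) (by omega)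
  have hdigits : {r ∈ Icc 1 (p - 1) | b * r / p = b * (L % p * r % p) / p} =
      {r ∈ Icc 1 (p - 1) | b * L * r / p ∈ goodSlice b L} :=
    filter_congr fun r hr =>
      div_eq_mul_mod_div_iff_mem_goodSlice hb0 hL hLp (by rw [mem_Icc] at hr; omega)
  have hshift := card_filter_Icc_mul_div_mem_add_one hp0 hcopm (sub_one_mem_goodSlice hb0 hL)
  have hsum := card_filter_Icc_mul_sub_one_div_mem (G := goodSlice b L) hp0 (filter_subset _ _)
  rw [sum_mul_div_sub_mul_div, card_goodSlice hL (dvd_pow_self b (by omega))] at hsum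
  have hdiv : (p - 1) / b = L * (p / (b * L)) + p % (b * L) / b := by
    rw [Nat.sub_one_div_of_not_dvd hbp, Nat.mod_mul_right_div_self, ← Nat.div_div_eq_div_mul,
      Nat.div_add_mod]
  rw [hdigits, hdiv, ← goodSlice]
  push_cast at hsum ⊢
  omega

theorem deviation_formula (b ℓ p a : ℕ) (hb : 2 ≤ b) (hℓ : 1 ≤ ℓ)
    (hp : b ^ (ℓ + 1) < p) (hcop : Nat.gcd p b = 1)
    (ha : 1 ≤ a) (ham : a < b ^ (ℓ + 1)) (hacop : Nat.gcd a (b ^ (ℓ + 1)) = 1)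
    (hcong : p % b ^ (ℓ + 1) = a) :
    ((((Finset.Icc 1 (p - 1)).filter
        (fun r => b * r / p = b * (b ^ ℓ % p * r % p) / p)).card : ℤ)
      - ((p - 1) / b : ℕ)) =
    -1 - (a / b : ℕ)
      + ∑ n ∈ (Finset.range (b ^ (ℓ + 1))).filter (fun n => n / b ^ ℓ = n % b),
        (((n + 1) * a / b ^ (ℓ + 1) : ℕ) - (n * a / b ^ (ℓ + 1) : ℕ) : ℤ) :=
  deviation_formula_general b ℓ p a hb hℓ hp hcop hcong
end

section
/- Let b ≥ 2, ℓ ≥ 1, m = b^{ℓ+1}, and S(a) as in the reflection identity. Then Σ over units a mod m of S(a) equals -φ(m)/2; equivalently, the average of S over the units is -1/2. -/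
/-!
Reflecting `a ↦ m - a` permutes the units modulo `m`, so it suffices to show
`S(a) + S(m - a) = -1`. Since `b ∣ m` and `b ∤ a`, `⌊a/b⌋ + ⌊(m-a)/b⌋ = m/b - 1`. For the digit
sum, `⌊ka/m⌋ + ⌊k(m-a)/m⌋` equals `k` if `m ∣ k` and `k - 1` otherwise, so the paired increments
over `n ∈ G` add up to `#G`, the boundary corrections at `n = 0` and `n = m - 1 ∈ G` cancelling;
and `#G = b^ℓ = m/b`.
-/

open Finset

theorem Finset.sum_add_sum_eq_card_nsmul_of_involutive {ι M : Type*} [AddCommMonoid M]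
    {s : Finset ι} {f : ι → M} {c : M} (σ : ι → ι) (hσ : ∀ x ∈ s, σ x ∈ s)
    (hσσ : ∀ x ∈ s, σ (σ x) = x) (hf : ∀ x ∈ s, f x + f (σ x) = c) :
    ∑ x ∈ s, f x + ∑ x ∈ s, f x = #s • c := by
  have hreflect : ∑ x ∈ s, f x = ∑ x ∈ s, f (σ x) :=
    sum_nbij' σ σ hσ hσ hσσ hσσ fun x hx => by rw [hσσ x hx]
  nth_rw 2 [hreflect]
  rw [← sum_add_distrib, sum_congr rfl hf, sum_const]

theorem Int.ediv_add_mul_sub_ediv (x k : ℤ) {m : ℤ} (hm : 0 < m) :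
    x / m + (k * m - x) / m = k - if m ∣ x then 0 else 1 := by
  rw [sub_eq_neg_add, Int.add_mul_ediv_right _ _ hm.ne', Int.neg_ediv, Int.sign_eq_one_of_pos hm]
  ring

theorem Nat.div_add_mul_sub_div (x k : ℕ) {m : ℕ} (hm : 0 < m) (hx : x ≤ k * m) :
    ((x / m : ℕ) : ℤ) + ((k * m - x) / m : ℕ) = k - if m ∣ x then 0 else 1 := by
  push_cast [Nat.cast_sub hx]
  simpa only [Int.natCast_dvd_natCast] using Int.ediv_add_mul_sub_ediv x k (m := m) (by omega)

theorem Nat.card_filter_Icc_coprime {m : ℕ} (hm : m ≠ 1) :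
    #{a ∈ Icc 1 (m - 1) | a.Coprime m} = Nat.totient m := by
  rw [← Nat.filter_coprime_Ico_eq_totient m 1]
  congr 1
  ext a
  simp only [mem_filter, mem_Icc, mem_Ico, Nat.coprime_comm]
  constructor
  · rintro ⟨⟨ha1, ham⟩, hcop⟩
    exact ⟨⟨ha1, by omega⟩, hcop⟩
  · rintro ⟨⟨ha1, ham⟩, hcop⟩
    refine ⟨⟨ha1, ?_⟩, hcop⟩
    rcases Nat.lt_or_ge a m with h | h
    · omega
    · obtain rfl : a = m := by omega
      exact absurd ((Nat.coprime_self _).mp hcop) hm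

theorem Nat.card_filter_div_eq_mod {b B : ℕ} (hbB : b ∣ B) :
    #{n ∈ range (B * b) | n / B = n % b} = B := by
  conv_rhs => rw [← card_range B]
  refine card_nbij' (· % B) (fun j => j % b * B + j) ?_ ?_ ?_ ?_
  · intro n hn
    simp only [coe_filter, mem_range, Set.mem_ofPred_eq, coe_range, Set.mem_Iio] at hn ⊢
    exact Nat.mod_lt _ (Nat.pos_of_mul_pos_right (by omega : 0 < B * b))
  · intro j hj
    simp only [coe_filter, mem_range, Set.mem_ofPred_eq, coe_range, Set.mem_Iio] at hj ⊢
    have hb : j % b < b := Nat.mod_lt _ (Nat.pos_of_ne_zero fun h => by simp_all)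
    refine ⟨by nlinarith, ?_⟩
    rw [add_comm, Nat.add_mul_div_right _ _ (by omega), Nat.div_eq_of_lt hj, zero_add]
    simp [Nat.add_mod, Nat.mul_mod, Nat.mod_eq_zero_of_dvd hbB]
  · intro n hn
    simp only [coe_filter, mem_range, Set.mem_ofPred_eq] at hn
    simp only [Nat.mod_mod_of_dvd n hbB, ← hn.2, Nat.div_add_mod']
  · intro j hj
    simp only [coe_range, Set.mem_Iio] at hj
    simp [Nat.mod_eq_of_lt hj]

theorem Nat.mul_sub_one_div_self {B b : ℕ} (hB : 0 < B) (hb : 0 < b) :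
    (B * b - 1) / B = b - 1 := by
  refine Nat.div_eq_of_lt_le ?_ ?_
  · rw [Nat.sub_one_mul, mul_comm]
    omega
  · rw [Nat.sub_one_add_one hb.ne', mul_comm b B]
    exact Nat.sub_lt (by positivity) one_pos

theorem Nat.mul_sub_one_mod_of_dvd {B b : ℕ} (hB : 0 < B) (hbB : b ∣ B) :
    (B * b - 1) % b = b - 1 := by
  obtain ⟨c, rfl⟩ := hbB
  have hb : 0 < b := Nat.pos_of_mul_pos_right hB
  have hc : 0 < c := Nat.pos_of_mul_pos_left hB
  have hbcb : b ≤ b * (c * b) := Nat.le_mul_of_pos_right b (by positivity)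
  rw [show b * c * b - 1 = b * (c * b - 1) + (b - 1) by rw [Nat.mul_sub_one, mul_assoc]; omega,
    Nat.mul_add_mod, Nat.mod_eq_of_lt (by omega)]

section FloorStep

def floorStep (m a n : ℕ) : ℤ := ((n + 1) * a / m : ℕ) - (n * a / m : ℕ)

variable {m a : ℕ}

theorem floor_mul_add_floor_mul_sub (hm : 0 < m) (hcop : a.Coprime m) (ham : a ≤ m) (k : ℕ) :
    ((k * a / m : ℕ) : ℤ) + (k * (m - a) / m : ℕ) = k - if m ∣ k then 0 else 1 := by
  rw [Nat.mul_sub, Nat.div_add_mul_sub_div _ _ hm (Nat.mul_le_mul_left k ham)]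
  simp only [hcop.symm.dvd_mul_right]

theorem floorStep_add_floorStep_sub (hm : 0 < m) (hcop : a.Coprime m) (ham : a ≤ m) (n : ℕ) :
    floorStep m a n + floorStep m (m - a) n =
      1 + (if m ∣ n + 1 then 1 else 0) - (if m ∣ n then 1 else 0) := by
  have hsucc := floor_mul_add_floor_mul_sub hm hcop ham (n + 1)
  have hn := floor_mul_add_floor_mul_sub hm hcop ham n
  rw [Nat.cast_succ] at hsucc
  unfold floorStep
  split_ifs at hsucc hn ⊢ <;> linarith

theorem sum_floorStep_add_floorStep_sub (hm : 0 < m) (hcop : a.Coprime m) (ham : a ≤ m)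
    {G : Finset ℕ} (hG : G ⊆ range m) (h0 : 0 ∈ G) (hlast : m - 1 ∈ G) :
    ∑ n ∈ G, (floorStep m a n + floorStep m (m - a) n) = #G := by
  have hterm : ∀ n ∈ G, floorStep m a n + floorStep m (m - a) n =
      1 + (if n = m - 1 then 1 else 0) - (if n = 0 then 1 else 0) := by
    intro n hn
    have hnm : n < m := mem_range.mp (hG hn)
    have hdvd_succ : m ∣ n + 1 ↔ n = m - 1 :=
      ⟨fun h => by have := Nat.le_of_dvd (by omega) h; omega,
        fun h => by rw [h, Nat.sub_one_add_one hm.ne']⟩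
    have hdvd : m ∣ n ↔ n = 0 :=
      ⟨fun h => Nat.eq_zero_of_dvd_of_lt h hnm, fun h => h ▸ dvd_zero m⟩
    simp only [floorStep_add_floorStep_sub hm hcop ham, hdvd_succ, hdvd]
  rw [sum_congr rfl hterm, sum_sub_distrib, sum_add_distrib, sum_ite_eq', sum_ite_eq',
    if_pos hlast, if_pos h0, sum_const, nsmul_one]
  ring

end FloorStep

section Reflection

/-- The paper's `G`: the `n < b ^ (ℓ + 1)` whose leading and last base-`b` digits agree. -/
def leadDigitEqLastDigit (b ℓ : ℕ) : Finset ℕ := {n ∈ range (b ^ (ℓ + 1)) | n / b ^ ℓ = n % b}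

/-- The paper's `S(a)`. -/
def reflectionSum (b ℓ a : ℕ) : ℤ :=
  -1 - (a / b : ℕ) + ∑ n ∈ leadDigitEqLastDigit b ℓ, floorStep (b ^ (ℓ + 1)) a n

variable {b ℓ : ℕ}

theorem leadDigitEqLastDigit_subset_range : leadDigitEqLastDigit b ℓ ⊆ range (b ^ (ℓ + 1)) :=
  filter_subset _ _

theorem card_leadDigitEqLastDigit (hℓ : 1 ≤ ℓ) : #(leadDigitEqLastDigit b ℓ) = b ^ ℓ := by
  rw [leadDigitEqLastDigit, pow_succ, Nat.card_filter_div_eq_mod (dvd_pow_self b (by omega))]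

theorem zero_mem_leadDigitEqLastDigit (hb : 0 < b) : 0 ∈ leadDigitEqLastDigit b ℓ := by
  simp [leadDigitEqLastDigit, hb]

theorem sub_one_mem_leadDigitEqLastDigit (hb : 0 < b) (hℓ : 1 ≤ ℓ) :
    b ^ (ℓ + 1) - 1 ∈ leadDigitEqLastDigit b ℓ := by
  have hB : 0 < b ^ ℓ := by positivity
  simp only [leadDigitEqLastDigit, mem_filter, mem_range, pow_succ]
  exact ⟨Nat.sub_lt (by positivity) one_pos, by rw [Nat.mul_sub_one_div_self hB hb,
    Nat.mul_sub_one_mod_of_dvd hB (dvd_pow_self b (by omega))]⟩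

theorem reflectionSum_add_reflectionSum_sub (hb : 1 < b) (hℓ : 1 ≤ ℓ) {a : ℕ}
    (hcop : a.Coprime (b ^ (ℓ + 1))) (ha : a ≤ b ^ (ℓ + 1)) :
    reflectionSum b ℓ a + reflectionSum b ℓ (b ^ (ℓ + 1) - a) = -1 := by
  have hm : 0 < b ^ (ℓ + 1) := by positivity
  have hndvd : ¬ b ∣ a := fun h =>
    Nat.not_coprime_of_dvd_of_dvd hb h (dvd_pow_self b (by omega)) hcop
  have hdigit : ((a / b : ℕ) : ℤ) + ((b ^ (ℓ + 1) - a) / b : ℕ) = b ^ ℓ - 1 := by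
    rw [pow_succ] at ha ⊢
    rw [Nat.div_add_mul_sub_div a _ (by omega) ha, if_neg hndvd]
    push_cast
    ring
  have hG := sum_floorStep_add_floorStep_sub hm hcop ha leadDigitEqLastDigit_subset_range
    (zero_mem_leadDigitEqLastDigit (by omega)) (sub_one_mem_leadDigitEqLastDigit (by omega) hℓ)
  rw [sum_add_distrib, card_leadDigitEqLastDigit hℓ] at hG
  unfold reflectionSum
  push_cast at hG
  linarith

end Reflection

theorem grand_mean (b ℓ : ℕ) (hb : 2 ≤ b) (hℓ : 1 ≤ ℓ) :
    ∑ a ∈ (Finset.Icc 1 (b ^ (ℓ + 1) - 1)).filter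
        (fun a => Nat.Coprime a (b ^ (ℓ + 1))),
      (-1 - (a / b : ℕ)
        + ∑ n ∈ (Finset.range (b ^ (ℓ + 1))).filter (fun n => n / b ^ ℓ = n % b),
          (((n + 1) * a / b ^ (ℓ + 1) : ℕ) - (n * a / b ^ (ℓ + 1) : ℕ) : ℤ)) =
    -((Nat.totient (b ^ (ℓ + 1)) : ℤ)) / 2 := by
  have hm : 1 < b ^ (ℓ + 1) := Nat.one_lt_pow (by omega) (by omega)
  have hunit : ∀ a ∈ {a ∈ Icc 1 (b ^ (ℓ + 1) - 1) | a.Coprime (b ^ (ℓ + 1))},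
      1 ≤ a ∧ a < b ^ (ℓ + 1) ∧ a.Coprime (b ^ (ℓ + 1)) := by
    intro a ha
    simp only [mem_filter, mem_Icc] at ha
    exact ⟨ha.1.1, by omega, ha.2⟩
  have hsum := sum_add_sum_eq_card_nsmul_of_involutive (f := reflectionSum b ℓ) (c := -1)
    (b ^ (ℓ + 1) - ·)
    (fun a ha => by
      obtain ⟨ha1, ham, hcop⟩ := hunit a ha
      simp only [mem_filter, mem_Icc, Nat.coprime_self_sub_left ham.le]
      exact ⟨by omega, hcop⟩)
    (fun a ha => by obtain ⟨-, ham, -⟩ := hunit a ha; omega)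
    (fun a ha => by
      obtain ⟨-, ham, hcop⟩ := hunit a ha
      exact reflectionSum_add_reflectionSum_sub hb hℓ hcop ham.le)
  rw [Nat.card_filter_Icc_coprime hm.ne', nsmul_eq_mul] at hsum
  change ∑ a ∈ _, reflectionSum b ℓ a = _
  omega
end

section
/- Let m ≥ 3 and c an integer with 2 ≤ c ≤ m-1 (so c ≢ 0, 1 mod m). Define W = {a ∈ (ℤ/mℤ)^× : (c·a mod m) < (a mod m)}, using representatives in {1,...,m-1}. Then the map a ↦ m - a is a bijection between W and its complement in the units, and |W| = φ(m)/2. -/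
theorem cop_sub (a m : ℕ) (h : a ≤ m) : Nat.Coprime (m - a) m ↔ Nat.Coprime a m := by
  nth_rewrite 2 [show m = a + (m - a) by omega]
  rw [Nat.coprime_add_self_right, Nat.coprime_sub_self_left h, Nat.coprime_comm]

theorem half_group (m c : ℕ) (hm : 3 ≤ m) (hc1 : 2 ≤ c) (hc2 : c ≤ m - 1) :
    (∀ a ∈ (Finset.Icc 1 (m - 1)).filter (fun a => Nat.Coprime a m),
      (a ∈ (Finset.Icc 1 (m - 1)).filter
          (fun a => Nat.Coprime a m ∧ c * a % m < a) ↔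
       (m - a) ∉ (Finset.Icc 1 (m - 1)).filter
          (fun a => Nat.Coprime a m ∧ c * a % m < a))) ∧
    ((Finset.Icc 1 (m - 1)).filter
        (fun a => Nat.Coprime a m ∧ c * a % m < a)).card = Nat.totient m / 2 := by
  have hm0 : 0 < m := by omega
  set U := (Finset.Icc 1 (m - 1)).filter (fun a => Nat.Coprime a m) with hUdef
  set S := (Finset.Icc 1 (m - 1)).filter
      (fun a => Nat.Coprime a m ∧ c * a % m < a) with hSdef
  have key : ∀ a ∈ U, (a ∈ S ↔ (m - a) ∉ S) := by
    intro a ha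
    simp only [hUdef, Finset.mem_filter, Finset.mem_Icc] at ha
    obtain ⟨⟨ha1, ha2⟩, hcop⟩ := ha
    have hrlt : c * a % m < m := Nat.mod_lt _ hm0
    have hrne0 : c * a % m ≠ 0 := by
      intro h
      have hd : m ∣ c * a := Nat.dvd_of_mod_eq_zero h
      have hd2 : m ∣ c := (Nat.coprime_comm.mp hcop).dvd_of_dvd_mul_right hd
      have := Nat.le_of_dvd (by omega) hd2
      omega
    have hrne : c * a % m ≠ a := by
      intro h
      have h1 : a % m = c * a % m := by rw [h, Nat.mod_eq_of_lt (by omega)]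
      have h2 : m ∣ c * a - a :=
        (Nat.modEq_iff_dvd' (Nat.le_mul_of_pos_left a (by omega))).mp h1
      have h3 : c * a - a = (c - 1) * a := by
        rw [Nat.sub_one_mul]
      rw [h3] at h2
      have h4 : m ∣ c - 1 := (Nat.coprime_comm.mp hcop).dvd_of_dvd_mul_right h2
      have := Nat.le_of_dvd (by omega) h4
      omega
    have hs : c * (m - a) % m = m - c * a % m := by
      have hsum : (c * (m - a) + c * a) % m = 0 := by
        rw [show c * (m - a) + c * a = c * m by rw [← Nat.mul_add]; congr 1; omega]
        exact Nat.mul_mod_left c m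
      have h1 : (c * (m - a) % m + c * a % m) % m = 0 := by
        rw [← Nat.add_mod]; exact hsum
      obtain ⟨k, hk⟩ := Nat.dvd_of_mod_eq_zero h1
      have hslt : c * (m - a) % m < m := Nat.mod_lt _ hm0
      have hk1 : k = 1 := by
        rcases Nat.lt_or_ge k 2 with h | h
        · interval_cases k <;> omega
        · have : m * 2 ≤ m * k := Nat.mul_le_mul_left m h
          omega
      subst hk1
      omega
    have hcop' : Nat.Coprime (m - a) m := (cop_sub a m (by omega)).mpr hcop
    simp only [hSdef, Finset.mem_filter, Finset.mem_Icc, hs]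
    constructor
    · rintro ⟨_, _, hlt⟩ ⟨_, _, hlt'⟩
      omega
    · intro h
      refine ⟨⟨ha1, ha2⟩, hcop, ?_⟩
      by_contra hlt
      exact h ⟨⟨by omega, by omega⟩, hcop', by omega⟩
  refine ⟨key, ?_⟩
  have hsub : S ⊆ U := by
    intro a ha
    simp only [hSdef, Finset.mem_filter] at ha
    simp only [hUdef, Finset.mem_filter]
    exact ⟨ha.1, ha.2.1⟩
  have hUcard : U.card = Nat.totient m := by
    rw [Nat.totient]
    apply congrArg Finset.card
    ext a
    simp only [hUdef, Finset.mem_filter, Finset.mem_Icc, Finset.mem_range]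
    constructor
    · rintro ⟨⟨h1, h2⟩, h3⟩
      exact ⟨by omega, h3.symm⟩
    · rintro ⟨h1, h2⟩
      refine ⟨⟨?_, by omega⟩, h2.symm⟩
      rcases Nat.eq_zero_or_pos a with rfl | h
      · rw [Nat.coprime_zero_right] at h2; omega
      · exact h
  have hbij : (U \ S).card = S.card := by
    apply Finset.card_bij (fun a _ => m - a)
    · intro a ha
      have haU : a ∈ U := (Finset.mem_sdiff.mp ha).1
      have haS : a ∉ S := (Finset.mem_sdiff.mp ha).2
      simp only [hUdef, Finset.mem_filter, Finset.mem_Icc] at haU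
      have hmem : m - a ∈ U := by
        simp only [hUdef, Finset.mem_filter, Finset.mem_Icc]
        exact ⟨⟨by omega, by omega⟩, (cop_sub a m (by omega)).mpr haU.2⟩
      have := key (m - a) hmem
      rw [show m - (m - a) = a by omega] at this
      exact this.mpr haS
    · intro a ha b hb hab
      have haU := (Finset.mem_sdiff.mp ha).1
      have hbU := (Finset.mem_sdiff.mp hb).1
      simp only [hUdef, Finset.mem_filter, Finset.mem_Icc] at haU hbU
      omega
    · intro b hb
      have hbU : b ∈ U := hsub hb
      simp only [hUdef, Finset.mem_filter, Finset.mem_Icc] at hbU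
      refine ⟨m - b, ?_, by omega⟩
      have hmem : m - b ∈ U := by
        simp only [hUdef, Finset.mem_filter, Finset.mem_Icc]
        exact ⟨⟨by omega, by omega⟩, (cop_sub b m (by omega)).mpr hbU.2⟩
      rw [Finset.mem_sdiff]
      refine ⟨hmem, ?_⟩
      have := key (m - b) hmem
      rw [show m - (m - b) = b by omega] at this
      intro hc
      exact (this.mp hc) hb
  have hsd : (U \ S).card = U.card - S.card := Finset.card_sdiff_of_subset hsub
  have hle : S.card ≤ U.card := Finset.card_le_card hsub
  omega
end
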